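/- Let T be a nonempty finite type, let f, h : T → ℝ, let γ > 0, and let λ ∈ (0,1). Define p_τ(t) = exp(-h(t)/γ) / Σ_{t'} exp(-h(t')/γ), q₁(θ) = exp(-(f(θ)+h(θ))/γ) / Σ_{t'} exp(-(f(t')+h(t'))/γ), q₀(θ) = p_τ(θ), and ℓ_{p_τ} = -γ · log( Σ_t exp(-f(t)/γ) · p_τ(t) ). Then for every θ ∈ T, λ·q₁(θ) / ( λ·q₁(θ) + (1-λ)·q₀(θ) ) = σ( (1/γ)·(ℓ_{p_τ} - f(θ)) + log(λ/(1-λ)) ), where σ(x) = 1/(1 + exp(-x)) is the sigmoid function. -/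

import Mathlib

open Real Finset

noncomputable def sigmoid (x : ℝ) : ℝ := 1 / (1 + Real.exp (-x))

/-
The posterior odds of membership are the prior odds times the likelihood ratio `q₁(θ)/q₀(θ)`,
and `a/(a+b) = σ(log a - log b)`. For Gibbs posteriors with partition functions `Z` the
likelihood ratio is `exp(-f(θ)/γ) · Z(h)/Z(f+h)`, and `Z(f+h)/Z(h)` is exactly the
`p_τ`-average of `exp(-f/γ)`, that is `exp(-ℓ_{p_τ}/γ)`; taking logarithms gives `(ℓ_{p_τ} - f(θ))/γ`.
-/

namespace SourceInference

variable {T : Type*} [Fintype T]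

noncomputable def partitionFn (γ : ℝ) (E : T → ℝ) : ℝ :=
  ∑ t : T, exp (-E t / γ)

noncomputable def gibbs (γ : ℝ) (E : T → ℝ) (t : T) : ℝ :=
  exp (-E t / γ) / partitionFn γ E

theorem partitionFn_pos [Nonempty T] (γ : ℝ) (E : T → ℝ) : 0 < partitionFn γ E :=
  sum_pos (fun _ _ => exp_pos _) univ_nonempty

theorem gibbs_pos [Nonempty T] (γ : ℝ) (E : T → ℝ) (t : T) : 0 < gibbs γ E t :=
  div_pos (exp_pos _) (partitionFn_pos γ E)

theorem log_gibbs [Nonempty T] (γ : ℝ) (E : T → ℝ) (t : T) :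
    log (gibbs γ E t) = -E t / γ - log (partitionFn γ E) := by
  rw [gibbs, log_div (exp_pos _).ne' (partitionFn_pos γ E).ne', log_exp]

theorem sum_exp_mul_gibbs (γ : ℝ) (f h : T → ℝ) :
    ∑ t : T, exp (-f t / γ) * gibbs γ h t = partitionFn γ (f + h) / partitionFn γ h := by
  simp only [gibbs, partitionFn, mul_div_assoc', ← exp_add, sum_div, Pi.add_apply, neg_add,
    add_div]

theorem log_gibbs_add_sub_log_gibbs [Nonempty T] {γ : ℝ} (hγ : γ ≠ 0) (f h : T → ℝ) (θ : T) :
    log (gibbs γ (f + h) θ) - log (gibbs γ h θ) =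
      (1 / γ) * (-γ * log (∑ t : T, exp (-f t / γ) * gibbs γ h t) - f θ) := by
  rw [log_gibbs, log_gibbs, sum_exp_mul_gibbs,
    log_div (partitionFn_pos γ (f + h)).ne' (partitionFn_pos γ h).ne', Pi.add_apply]
  field_simp
  ring

end SourceInference

theorem sigmoid_log_sub_log {a b : ℝ} (ha : 0 < a) (hb : 0 < b) :
    _root_.sigmoid (log a - log b) = a / (a + b) := by
  rw [_root_.sigmoid, neg_sub, ← log_div hb.ne' ha.ne', exp_log (div_pos hb ha)]
  field_simp

theorem mul_div_mul_add_mul_eq_sigmoid {a b l : ℝ} (ha : 0 < a) (hb : 0 < b) (hl0 : 0 < l)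
    (hl1 : l < 1) :
    l * a / (l * a + (1 - l) * b) = _root_.sigmoid (log a - log b + log (l / (1 - l))) := by
  have hl1' : 0 < 1 - l := sub_pos.mpr hl1
  rw [← sigmoid_log_sub_log (mul_pos hl0 ha) (mul_pos hl1' hb), log_mul hl0.ne' ha.ne',
    log_mul hl1'.ne' hb.ne', log_div hl0.ne' hl1'.ne']
  ring_nf

open SourceInference in
/-- Explicit finite-parameter-space form of Theorem 2 of the source inference attack
paper: the Bayes posterior probability that the record belongs to client `k`, given
the observed parameter `θ`, equals `σ((ℓ_{p_τ} - f(θ))/γ + log(λ/(1-λ)))`. -/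
theorem source_inference_posterior_eq_sigmoid {T : Type*} [Fintype T] [Nonempty T]
    (f h : T → ℝ) (γ : ℝ) (hγ : 0 < γ) (l : ℝ) (hl0 : 0 < l) (hl1 : l < 1)
    (pτ q₁ q₀ : T → ℝ) (ℓpτ : ℝ)
    (hpτ : pτ = fun t => exp (-h t / γ) / ∑ t' : T, exp (-h t' / γ))
    (hq₁ : q₁ = fun θ => exp (-(f θ + h θ) / γ) / ∑ t' : T, exp (-(f t' + h t') / γ))
    (hq₀ : q₀ = pτ)
    (hℓpτ : ℓpτ = -γ * log (∑ t : T, exp (-f t / γ) * pτ t)) :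
    ∀ θ : T,
      l * q₁ θ / (l * q₁ θ + (1 - l) * q₀ θ) =
        _root_.sigmoid ((1 / γ) * (ℓpτ - f θ) + log (l / (1 - l))) := by
  intro θ
  have hpτ_gibbs : pτ = gibbs γ h := hpτ
  have hq₁_gibbs : q₁ = gibbs γ (f + h) := hq₁
  subst hq₀ hℓpτ hpτ_gibbs hq₁_gibbs
  rw [mul_div_mul_add_mul_eq_sigmoid (gibbs_pos γ _ θ) (gibbs_pos γ h θ) hl0 hl1,
    log_gibbs_add_sub_log_gibbs hγ.ne']
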